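/- arXiv:2209.14381 — 2 statements merged into one kernel-verified Lean document; each statement's English description precedes it below -/
import Mathlib

section
/- Let E be a Riesz space and let p, q : ℕ → ℕ satisfy the deferred property. If x_n →^{D_{st_o}}_{p,q} x and y_n →^{D_{st_o}}_{p,q} y in E, then (x_n ∨ y_n) →^{D_{st_o}}_{p,q} (x ∨ y). -/
open Filter Topology

variable {E : Type*} [AddCommGroup E] [Lattice E]
  [CovariantClass E E (· + ·) (· ≤ ·)] [Module ℝ E] [PosSMulMono ℝ E]

/-- `p` and `q` satisfy the deferred property: `p n < q n` for all `n` and `q n → ∞`. -/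
def DeferredProperty (p q : ℕ → ℕ) : Prop :=
  (∀ n, p n < q n) ∧ Tendsto q atTop atTop

open Classical in
/-- The ratio `|{k ∈ K : p n < k ≤ q n}| / (q n - p n)`. -/
noncomputable def deferredRatio (p q : ℕ → ℕ) (K : Set ℕ) (n : ℕ) : ℝ :=
  (((Finset.Ioc (p n) (q n)).filter (fun k => k ∈ K)).card : ℝ) / ((q n : ℝ) - (p n : ℝ))

/-- The deferred density of `K ⊆ ℕ` is `a`. -/
def DeferredDensity (p q : ℕ → ℕ) (K : Set ℕ) (a : ℝ) : Prop :=
  Tendsto (deferredRatio p q K) atTop (nhds a)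

/-- `z` is deferred statistical order decreasing to `0`: there is an (infinite) set
`K = {k₁ < k₂ < ⋯}` of deferred density one along which `z` is decreasing with infimum `0`. -/
def DStatDecreasing (p q : ℕ → ℕ) (z : ℕ → E) : Prop :=
  ∃ K : Set ℕ, K.Infinite ∧ DeferredDensity p q K 1 ∧
    (∀ i ∈ K, ∀ j ∈ K, i ≤ j → z j ≤ z i) ∧ IsGLB (z '' K) 0

/-- `x` is deferred statistical order convergent to `l`. -/
def DStatOrderConv (p q : ℕ → ℕ) (x : ℕ → E) (l : E) : Prop :=
  ∃ z : ℕ → E, DStatDecreasing p q z ∧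
    ∃ K : Set ℕ, K.Infinite ∧ DeferredDensity p q K 1 ∧ ∀ k ∈ K, |x k - l| ≤ z k

/-!
A Birkhoff-type inequality `|x ⊔ y - (a ⊔ b)| ≤ |x - a| + |y - b|` shows that `z₁ + z₂` dominates
`|x n ⊔ y n - a ⊔ b|` on the intersection of the sets of deferred density one attached to `x` and
`y`. Such sets are closed under intersection (`d(A ∩ B) ≥ d(A) + d(B) - 1`) and, since `q n → ∞`,
infinite, hence cofinal in ℕ. Along a common cofinal set, two antitone families with infimum `0`
keep infimum `0`, and so does their sum: `c ≤ z₁ i + z₂ j` for all `i, j` forces `c ≤ 0`.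
-/

section DeferredDensity

variable {p q : ℕ → ℕ}

lemma deferredRatio_nonneg (K : Set ℕ) (n : ℕ) : 0 ≤ deferredRatio p q K n := by
  rcases le_or_gt (q n) (p n) with h | h
  · simp [deferredRatio, Finset.Ioc_eq_empty_of_le h]
  have : (p n : ℝ) < q n := by exact_mod_cast h
  exact div_nonneg (Nat.cast_nonneg _) (sub_nonneg.mpr this.le)

lemma deferredRatio_mono (hpq : ∀ n, p n < q n) {A B : Set ℕ} (hAB : A ⊆ B) (n : ℕ) :
    deferredRatio p q A n ≤ deferredRatio p q B n := by
  have : (p n : ℝ) < q n := by exact_mod_cast hpq n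
  unfold deferredRatio
  gcongr

open Classical in
lemma deferredRatio_add_le (hpq : ∀ n, p n < q n) (A B : Set ℕ) (n : ℕ) :
    deferredRatio p q A n + deferredRatio p q B n ≤ 1 + deferredRatio p q (A ∩ B) n := by
  have hcard : ∀ I : Finset ℕ, (I.filter (· ∈ A)).card + (I.filter (· ∈ B)).card ≤
      I.card + (I.filter (· ∈ A ∩ B)).card := fun I => by
    rw [← Finset.card_union_add_card_inter, ← Finset.filter_or, ← Finset.filter_and]
    exact Nat.add_le_add_right (Finset.card_le_card (Finset.filter_subset _ _)) _
  have hlen : ((Finset.Ioc (p n) (q n)).card : ℝ) = q n - p n := by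
    rw [Nat.card_Ioc, Nat.cast_sub (hpq n).le]
  have hpos : (0 : ℝ) < q n - p n := sub_pos.mpr (by exact_mod_cast hpq n)
  simp only [deferredRatio]
  rw [← div_self hpos.ne', ← add_div, ← add_div, div_le_div_iff_of_pos_right hpos, ← hlen]
  -- `convert` matches the instance `Set.decidableInter` in `hcard` with the classical one
  -- that `deferredRatio` uses for `A ∩ B`.
  exact_mod_cast (by convert hcard (Finset.Ioc (p n) (q n)))

lemma DeferredDensity.inter (hpq : ∀ n, p n < q n) {A B : Set ℕ}
    (hA : DeferredDensity p q A 1) (hB : DeferredDensity p q B 1) :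
    DeferredDensity p q (A ∩ B) 1 := by
  have hlower : Tendsto (fun n => deferredRatio p q A n + deferredRatio p q B n - 1) atTop
      (𝓝 1) := by
    simpa using (hA.add hB).sub_const 1
  refine tendsto_of_tendsto_of_tendsto_of_le_of_le hlower hA (fun n => ?_)
    (deferredRatio_mono hpq Set.inter_subset_left)
  linarith [deferredRatio_add_le hpq A B n]

open Classical in
lemma deferredRatio_le_of_subset_Iic {K : Set ℕ} {M n : ℕ} (hK : K ⊆ Set.Iic M)
    (hpq : p n < q n) (hM : M ≤ q n) : deferredRatio p q K n ≤ M / q n := by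
  set c := ((Finset.Ioc (p n) (q n)).filter (· ∈ K)).card
  have hc : c ≤ M - p n :=
    (Finset.card_le_card fun k hk => by
      simp only [Finset.mem_filter, Finset.mem_Ioc] at hk
      exact Finset.mem_Ioc.mpr ⟨hk.1.1, hK hk.2⟩).trans (Nat.card_Ioc _ _).le
  have hpq' : (p n : ℝ) < q n := by exact_mod_cast hpq
  have hM' : (M : ℝ) ≤ q n := by exact_mod_cast hM
  unfold deferredRatio
  rw [div_le_div_iff₀ (sub_pos.mpr hpq') (by linarith [(p n).cast_nonneg (α := ℝ)])]
  -- `c * q n ≤ (M - p n) * q n ≤ M * (q n - p n)`, as `p n * M ≤ p n * q n`.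
  rcases le_or_gt M (p n) with hMp | hMp
  · have hc0 : (c : ℝ) = 0 := by simp only [Nat.cast_eq_zero]; omega
    rw [hc0, zero_mul]
    exact mul_nonneg M.cast_nonneg (sub_pos.mpr hpq').le
  · have hc' : (c : ℝ) ≤ M - p n := by
      rw [← Nat.cast_sub hMp.le]; exact_mod_cast hc
    nlinarith [(p n).cast_nonneg (α := ℝ)]

lemma deferredDensity_zero_of_finite (hpq : DeferredProperty p q) {K : Set ℕ} (hK : K.Finite) :
    DeferredDensity p q K 0 := by
  obtain ⟨M, hM⟩ := hK.bddAbove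
  have hbound : Tendsto (fun n => (M : ℝ) / q n) atTop (𝓝 0) :=
    tendsto_const_nhds.div_atTop (tendsto_natCast_atTop_atTop.comp hpq.2)
  refine squeeze_zero' (.of_forall (deferredRatio_nonneg K)) ?_ hbound
  filter_upwards [hpq.2.eventually_ge_atTop M] with n hn
  exact deferredRatio_le_of_subset_Iic (fun _ hk => hM hk) (hpq.1 n) hn

lemma DeferredDensity.infinite (hpq : DeferredProperty p q) {K : Set ℕ} {a : ℝ}
    (hK : DeferredDensity p q K a) (ha : a ≠ 0) : K.Infinite :=
  fun hfin => ha (tendsto_nhds_unique hK (deferredDensity_zero_of_finite hpq hfin))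

end DeferredDensity

section OrderedGroup

variable {ι G : Type*} [Preorder ι]

lemma IsGLB.image_of_isCofinalFor [Preorder G] {z : ι → G} {K L : Set ι} {a : G}
    (h : IsGLB (z '' L) a) (hz : AntitoneOn z L) (hKL : K ⊆ L) (hcof : IsCofinalFor L K) :
    IsGLB (z '' K) a :=
  h.of_isCoinitialFor (Set.image_mono hKL) <| by
    rintro _ ⟨i, hi, rfl⟩
    obtain ⟨j, hj, hij⟩ := hcof hi
    exact ⟨z j, Set.mem_image_of_mem z hj, hz hi (hKL hj) hij⟩

lemma IsGLB.image_add [AddCommGroup G] [Preorder G] [AddLeftMono G] {z₁ z₂ : ι → G}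
    {K : Set ι} {a b : G} (hK : DirectedOn (· ≤ ·) K) (hz₁ : AntitoneOn z₁ K)
    (hz₂ : AntitoneOn z₂ K) (ha : IsGLB (z₁ '' K) a) (hb : IsGLB (z₂ '' K) b) :
    IsGLB ((fun i => z₁ i + z₂ i) '' K) (a + b) := by
  refine ⟨?_, fun c hc => ?_⟩
  · rintro _ ⟨i, hi, rfl⟩
    exact add_le_add (ha.1 ⟨i, hi, rfl⟩) (hb.1 ⟨i, hi, rfl⟩)
  have hcross : ∀ i ∈ K, ∀ j ∈ K, c ≤ z₁ i + z₂ j := fun i hi j hj => by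
    obtain ⟨k, hk, hik, hjk⟩ := hK i hi j hj
    exact (hc ⟨k, hk, rfl⟩).trans (add_le_add (hz₁ hi hk hik) (hz₂ hj hk hjk))
  have hsub : ∀ i ∈ K, c - b ≤ z₁ i := fun i hi =>
    sub_le_comm.mp <| hb.2 <| by
      rintro _ ⟨j, hj, rfl⟩
      exact sub_le_iff_le_add'.mpr (hcross i hi j hj)
  exact sub_le_iff_le_add.mp <| ha.2 <| by
    rintro _ ⟨i, hi, rfl⟩
    exact hsub i hi

lemma abs_sup_sub_sup_le_add [Lattice G] [AddCommGroup G] [AddLeftMono G] (a b c d : G) :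
    |a ⊔ b - c ⊔ d| ≤ |a - c| + |b - d| :=
  calc |a ⊔ b - c ⊔ d| = |(a ⊔ b - c ⊔ b) + (c ⊔ b - c ⊔ d)| := by rw [sub_add_sub_cancel]
    _ ≤ |a ⊔ b - c ⊔ b| + |c ⊔ b - c ⊔ d| := abs_add_le _ _
    _ ≤ |a - c| + |b - d| := add_le_add (abs_sup_sub_sup_le_abs a c b) <| by
      simpa only [sup_comm c] using abs_sup_sub_sup_le_abs b d c

end OrderedGroup

lemma DStatDecreasing.add {F : Type*} [AddCommGroup F] [Lattice F] [AddLeftMono F]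
    {p q : ℕ → ℕ} {z₁ z₂ : ℕ → F} (hpq : DeferredProperty p q)
    (h₁ : DStatDecreasing p q z₁) (h₂ : DStatDecreasing p q z₂) :
    DStatDecreasing p q (fun n => z₁ n + z₂ n) := by
  obtain ⟨K₁, -, hK₁, hz₁, hglb₁⟩ := h₁
  obtain ⟨K₂, -, hK₂, hz₂, hglb₂⟩ := h₂
  replace hz₁ : AntitoneOn z₁ K₁ := fun i hi j hj => hz₁ i hi j hj
  replace hz₂ : AntitoneOn z₂ K₂ := fun i hi j hj => hz₂ i hi j hj
  have hK := hK₁.inter hpq.1 hK₂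
  have hKinf := hK.infinite hpq one_ne_zero
  have hcof : ∀ L : Set ℕ, IsCofinalFor L (K₁ ∩ K₂) := fun _ i _ =>
    (hKinf.exists_gt i).imp fun _ h => ⟨h.1, h.2.le⟩
  have hz₁' : AntitoneOn z₁ (K₁ ∩ K₂) := hz₁.mono Set.inter_subset_left
  have hz₂' : AntitoneOn z₂ (K₁ ∩ K₂) := hz₂.mono Set.inter_subset_right
  refine ⟨K₁ ∩ K₂, hKinf, hK, fun i hi j hj => hz₁'.add hz₂' hi hj, ?_⟩
  simpa only [add_zero] using
    (hglb₁.image_of_isCofinalFor hz₁ Set.inter_subset_left (hcof _)).image_add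
      (.of_linearOrder _) hz₁' hz₂'
      (hglb₂.image_of_isCofinalFor hz₂ Set.inter_subset_right (hcof _))

theorem stmt7 (p q : ℕ → ℕ) (hpq : DeferredProperty p q) (x y : ℕ → E) (a b : E)
    (hx : DStatOrderConv p q x a) (hy : DStatOrderConv p q y b) :
    DStatOrderConv p q (fun n => x n ⊔ y n) (a ⊔ b) := by
  obtain ⟨z₁, hz₁, Kx, -, hKx, hx⟩ := hx
  obtain ⟨z₂, hz₂, Ky, -, hKy, hy⟩ := hy
  have hK := hKx.inter hpq.1 hKy
  refine ⟨_, hz₁.add hpq hz₂, Kx ∩ Ky, hK.infinite hpq one_ne_zero, hK, fun k hk => ?_⟩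
  calc |x k ⊔ y k - a ⊔ b| ≤ |x k - a| + |y k - b| := abs_sup_sub_sup_le_add _ _ _ _
    _ ≤ z₁ k + z₂ k := add_le_add (hx k hk.1) (hy k hk.2)
end

section
/- Let E be a Riesz space, let p, q : ℕ → ℕ satisfy the deferred property, and let (z_n) and (w_n) be sequences with z_n ↓^{D_{st_o}}_{p,q} 0 and w_n ↓^{D_{st_o}}_{p,q} 0. If δ_{p,q}({n ∈ ℕ : z_n ≠ w_n}) = 0, then C^{p,q}_{(z_n)} = C^{p,q}_{(w_n)}. -/
open Filter Topology

variable {E : Type*} [AddCommGroup E] [Lattice E]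
  [CovariantClass E E (· + ·) (· ≤ ·)] [Module ℝ E] [PosSMulMono ℝ E]

/-- The class `C^{p,q}_{(z_n)}` of all sequences deferred statistically order convergent
with dominating sequence `z`. -/
def CClass (p q : ℕ → ℕ) (z : ℕ → E) : Set (ℕ → E) :=
  {x | ∃ l : E, ∃ K : Set ℕ, DeferredDensity p q K 1 ∧ ∀ k ∈ K, |x k - l| ≤ z k}

/-! Off the set `{n | z n ≠ w n}` the two dominating sequences agree, and removing a set of
deferred density zero from a set of deferred density one leaves a set of deferred density one
(squeeze `ratio K - ratio S ≤ ratio (K \ S) ≤ ratio K`). -/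

section DeferredRatio

variable {p q : ℕ → ℕ} {n : ℕ}

lemma deferredRatio_of_le (h : q n ≤ p n) (K : Set ℕ) : deferredRatio p q K n = 0 := by
  simp [deferredRatio, Finset.Ioc_eq_empty_of_le h]

lemma deferredRatio_mono_s18 {K L : Set ℕ} (h : K ⊆ L) :
    deferredRatio p q K n ≤ deferredRatio p q L n := by
  rcases le_or_gt (q n) (p n) with hle | hlt
  · simp only [deferredRatio_of_le hle, le_refl]
  · have hd : (0 : ℝ) ≤ (q n : ℝ) - p n := sub_nonneg.mpr (by exact_mod_cast hlt.le)
    unfold deferredRatio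
    gcongr

lemma sub_deferredRatio_le_diff (K S : Set ℕ) :
    deferredRatio p q K n - deferredRatio p q S n ≤ deferredRatio p q (K \ S) n := by
  rcases le_or_gt (q n) (p n) with hle | hlt
  · simp only [deferredRatio_of_le hle, sub_zero, le_refl]
  · have hd : (0 : ℝ) < (q n : ℝ) - p n := sub_pos.mpr (by exact_mod_cast hlt)
    unfold deferredRatio
    rw [← sub_div, div_le_div_iff_of_pos_right hd, sub_le_iff_le_add, ← Nat.cast_add]
    classical
    refine Nat.cast_le.mpr ((Finset.card_le_card ?_).trans (Finset.card_union_le _ _))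
    intro k hk
    by_cases hS : k ∈ S <;> simp_all

end DeferredRatio

lemma DeferredDensity.diff {p q : ℕ → ℕ} {K S : Set ℕ} {a : ℝ}
    (hK : DeferredDensity p q K a) (hS : DeferredDensity p q S 0) :
    DeferredDensity p q (K \ S) a := by
  have hlow : Tendsto (fun n => deferredRatio p q K n - deferredRatio p q S n) atTop (𝓝 a) := by
    simpa using hK.sub hS
  exact tendsto_of_tendsto_of_tendsto_of_le_of_le hlow hK (fun n => sub_deferredRatio_le_diff K S)
    (fun n => deferredRatio_mono_s18 Set.sdiff_subset)

lemma CClass_subset_of_density_ne {V : Type*} [AddCommGroup V] [Lattice V] {p q : ℕ → ℕ}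
    {z w : ℕ → V} (hzw : DeferredDensity p q {n | z n ≠ w n} 0) : CClass p q z ⊆ CClass p q w := by
  rintro x ⟨l, K, hK, hx⟩
  refine ⟨l, K \ {n | z n ≠ w n}, hK.diff hzw, ?_⟩
  rintro k ⟨hkK, hzwk⟩
  rw [← not_not.mp hzwk]
  exact hx k hkK

theorem stmt18_general (p q : ℕ → ℕ) (z w : ℕ → E)
    (hzw : DeferredDensity p q {n | z n ≠ w n} 0) :
    CClass p q z = CClass p q w := by
  have hwz : DeferredDensity p q {n | w n ≠ z n} 0 := by simpa only [ne_comm] using hzw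
  exact (CClass_subset_of_density_ne hzw).antisymm (CClass_subset_of_density_ne hwz)

theorem stmt18 (p q : ℕ → ℕ) (hpq : DeferredProperty p q) (z w : ℕ → E)
    (hz : DStatDecreasing p q z) (hw : DStatDecreasing p q w)
    (hzw : DeferredDensity p q {n | z n ≠ w n} 0) :
    CClass p q z = CClass p q w :=
  stmt18_general p q z w hzw
end
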